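/- arXiv:0906.4694 — 2 statements merged into one kernel-verified Lean document; each statement's English description precedes it below -/
import Mathlib

section
/- Define, on the set D_k of pairings (perfect matchings) of {1,...,2k}, the function d(π,σ) = k − loops(π,σ), where loops(π,σ) is the number of loops (connected components) in the union of the two pairings viewed as graphs on {1,...,2k}. Then d is a metric on D_k: d(π,σ) = 0 iff π = σ, d is symmetric, and d satisfies the triangle inequality. -/
/-- A pairing (perfect matching) of a finite set, encoded as a fixed-point-free involution. -/
def IsPairing {N : ℕ} (f : Equiv.Perm (Fin N)) : Prop :=
  (∀ x, f (f x) = x) ∧ (∀ x, f x ≠ x)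

/-- `loops π σ` is the number of loops (connected components) obtained when superposing the
pairings `π` and `σ`, i.e. the number of components of the graph whose edges join `x` to `π x`
and `x` to `σ x`. -/
noncomputable def loops {N : ℕ} (π σ : Equiv.Perm (Fin N)) : ℕ :=
  Nat.card (Quot (fun x y : Fin N => π x = y ∨ σ x = y))

/-!
The loop partition of `π` and `σ` coarsens the partition of `Fin (2 * k)` into the `k` blocks
`{x, π x}` of `π`. Hence `loops π σ ≤ k`, with equality only if the two partitions coincide, that
is, every `σ x` lies in `{x, π x}`, which forces `σ = π`.

For the triangle inequality, the loop partitions of `(π, τ)` and `(τ, σ)` both coarsen the `k`-block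
partition of `τ`, and their join coarsens the loop partition of `(π, σ)`. Semimodularity of the
partition lattice, `#s + #t ≤ #u + #(s ⊔ t)` for block counts and any common refinement `u`, then
gives `loops π τ + loops τ σ ≤ k + loops π σ`. Semimodularity itself follows by merging the classes
of `u` one pair at a time until it becomes `s`.
-/

open Finset Relation

namespace Setoid

variable {α : Type*}

/-- The finest setoid coarser than `u` that relates `a` and `b`. -/
def merge (u : Setoid α) (a b : α) : Setoid α where
  r x y := u x y ∨ (u x a ∧ u b y) ∨ (u x b ∧ u a y)
  iseqv := by
    refine ⟨fun x => Or.inl (u.refl x), ?_, ?_⟩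
    · rintro x y (h | ⟨hxa, hby⟩ | ⟨hxb, hay⟩)
      · exact Or.inl (u.symm h)
      · exact Or.inr (Or.inr ⟨u.symm hby, u.symm hxa⟩)
      · exact Or.inr (Or.inl ⟨u.symm hay, u.symm hxb⟩)
    · rintro x y z (h | ⟨hxa, hby⟩ | ⟨hxb, hay⟩) (g | ⟨gya, gbz⟩ | ⟨gyb, gaz⟩)
      · exact Or.inl (u.trans h g)
      · exact Or.inr (Or.inl ⟨u.trans h gya, gbz⟩)
      · exact Or.inr (Or.inr ⟨u.trans h gyb, gaz⟩)
      · exact Or.inr (Or.inl ⟨hxa, u.trans hby g⟩)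
      · exact Or.inl (u.trans hxa (u.trans (u.symm (u.trans hby gya)) gbz))
      · exact Or.inl (u.trans hxa gaz)
      · exact Or.inr (Or.inr ⟨hxb, u.trans hay g⟩)
      · exact Or.inl (u.trans hxb gbz)
      · exact Or.inl (u.trans hxb (u.trans (u.symm (u.trans hay gyb)) gaz))

theorem le_merge (u : Setoid α) (a b : α) : u ≤ u.merge a b :=
  fun _ _ h => Or.inl h

theorem merge_rel (u : Setoid α) (a b : α) : u.merge a b a b :=
  Or.inr (Or.inl ⟨u.refl a, u.refl b⟩)

theorem merge_le {u s : Setoid α} {a b : α} (hus : u ≤ s) (hab : s a b) : u.merge a b ≤ s := by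
  rintro x y (h | ⟨hxa, hby⟩ | ⟨hxb, hay⟩)
  · exact hus h
  · exact s.trans (hus hxa) (s.trans hab (hus hby))
  · exact s.trans (hus hxb) (s.trans (s.symm hab) (hus hay))

theorem map_of_le_surjective {s t : Setoid α} (h : s ≤ t) : (map_of_le h).Surjective :=
  Quotient.ind fun x => ⟨⟦x⟧, rfl⟩

section Finite

variable [Finite α]

theorem card_quotient_le_of_le {s t : Setoid α} (h : s ≤ t) :
    Nat.card (Quotient t) ≤ Nat.card (Quotient s) :=
  Nat.card_le_card_of_surjective _ (map_of_le_surjective h)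

theorem eq_of_le_of_card_quotient_eq {s t : Setoid α} (h : s ≤ t)
    (hc : Nat.card (Quotient s) = Nat.card (Quotient t)) : s = t := by
  have hinj := ((Nat.bijective_iff_surjective_and_card _).mpr ⟨map_of_le_surjective h, hc⟩).1
  exact le_antisymm h fun x y hxy =>
    Quotient.exact (hinj (Quotient.sound hxy : (⟦x⟧ : Quotient t) = ⟦y⟧))

theorem card_quotient_le_card_quotient_merge_add_one (u : Setoid α) (a b : α) :
    Nat.card (Quotient u) ≤ Nat.card (Quotient (u.merge a b)) + 1 := by
  classical
  let f : Quotient u → Option (Quotient (u.merge a b)) := fun q =>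
    if q = ⟦a⟧ then none else some (map_of_le (u.le_merge a b) q)
  have hf : f.Injective := by
    refine Quotient.ind₂ fun x y hxy => ?_
    by_cases hx : (⟦x⟧ : Quotient u) = ⟦a⟧ <;> by_cases hy : (⟦y⟧ : Quotient u) = ⟦a⟧
    · exact hx.trans hy.symm
    · simp [f, hx, hy] at hxy
    · simp [f, hx, hy] at hxy
    · simp only [f, hx, hy, if_false, Option.some.injEq] at hxy
      rcases Quotient.exact hxy with h | ⟨hxa, -⟩ | ⟨-, hay⟩
      · exact Quotient.sound h
      · exact absurd (Quotient.sound hxa) hx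
      · exact absurd (Quotient.sound hay).symm hy
  simpa using Nat.card_le_card_of_injective f hf

theorem card_quotient_merge_lt {u : Setoid α} {a b : α} (hab : ¬ u a b) :
    Nat.card (Quotient (u.merge a b)) < Nat.card (Quotient u) := by
  have := Fintype.ofFinite (Quotient u)
  have := Fintype.ofFinite (Quotient (u.merge a b))
  simp only [Nat.card_eq_fintype_card]
  refine Fintype.card_lt_of_surjective_not_injective _ (map_of_le_surjective (u.le_merge a b))
    fun hinj => hab (Quotient.exact (hinj (Quotient.sound (u.merge_rel a b))))

theorem card_quotient_add_card_quotient_le {u s t : Setoid α} (hus : u ≤ s) (hut : u ≤ t) :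
    Nat.card (Quotient s) + Nat.card (Quotient t) ≤
      Nat.card (Quotient u) + Nat.card (Quotient (s ⊔ t)) := by
  induction hn : Nat.card (Quotient u) using Nat.strong_induction_on generalizing u t with
  | _ n ih =>
  by_cases hsu : s ≤ u
  · rw [le_antisymm hsu hus, sup_eq_right.mpr hut]
    omega
  obtain ⟨a, b, hab, hnab⟩ : ∃ a b, s a b ∧ ¬ u a b := by
    simpa [Setoid.le_def] using hsu
  -- Glue `a` to `b` in both `u` and `t`: `u` loses exactly one class, `t` at most one.
  have hsup : s ⊔ t.merge a b = s ⊔ t :=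
    le_antisymm (sup_le le_sup_left (merge_le le_sup_right (le_sup_left (a := s) hab)))
      (sup_le_sup_left (t.le_merge a b) s)
  have hu := card_quotient_merge_lt hnab
  have key := ih _ (hn ▸ hu) (merge_le hus hab)
    (merge_le (hut.trans (t.le_merge a b)) (t.merge_rel a b)) rfl
  have ht := card_quotient_le_card_quotient_merge_add_one t a b
  rw [hsup] at key
  omega

end Finite

end Setoid

namespace Function.Involutive

variable {α : Type*} {f : α → α}

def orbitSetoid (hf : Involutive f) : Setoid α where
  r x y := y = x ∨ y = f x
  iseqv := by
    refine ⟨fun x => Or.inl rfl, ?_, ?_⟩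
    · rintro x y (rfl | rfl)
      exacts [Or.inl rfl, Or.inr (hf x).symm]
    · rintro x y z (rfl | rfl) (rfl | rfl)
      exacts [Or.inl rfl, Or.inr rfl, Or.inr rfl, Or.inl (hf x)]

theorem two_mul_card_quotient_orbitSetoid [Fintype α] (hf : Involutive f)
    (hfix : ∀ x, f x ≠ x) : 2 * Nat.card (Quotient hf.orbitSetoid) = Fintype.card α := by
  classical
  have := Fintype.ofFinite (Quotient hf.orbitSetoid)
  have hfiber (q : Quotient hf.orbitSetoid) : #{y | Quotient.mk hf.orbitSetoid y = q} = 2 := by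
    induction q using Quotient.ind with | _ x => ?_
    have : ({y | Quotient.mk hf.orbitSetoid y = ⟦x⟧} : Finset α) = {x, f x} := by
      ext y
      simp only [mem_filter, mem_univ, true_and, mem_insert, mem_singleton, Quotient.eq]
      exact ⟨hf.orbitSetoid.symm, hf.orbitSetoid.symm⟩
    rw [this, card_pair (hfix x).symm]
  symm
  calc Fintype.card α = ∑ q, #{y | Quotient.mk hf.orbitSetoid y = q} :=
        card_eq_sum_card_fiberwise fun _ _ => mem_univ _
    _ = 2 * Nat.card (Quotient hf.orbitSetoid) := by
        rw [sum_congr rfl fun q _ => hfiber q, sum_const, card_univ, smul_eq_mul,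
          Nat.card_eq_fintype_card, mul_comm]

end Function.Involutive

section Loops

variable {α : Type*}

def loopSetoid (f g : α → α) : Setoid α :=
  EqvGen.setoid fun x y => f x = y ∨ g x = y

theorem loopSetoid_le {f g : α → α} {s : Setoid α} (hf : ∀ x, s x (f x)) (hg : ∀ x, s x (g x)) :
    loopSetoid f g ≤ s :=
  Setoid.eqvGen_le fun x _ h => h.elim (· ▸ hf x) (· ▸ hg x)

theorem loopSetoid_comm (f g : α → α) : loopSetoid f g = loopSetoid g f := by
  simp only [loopSetoid, or_comm]

theorem orbitSetoid_le_loopSetoid {f : α → α} (hf : Function.Involutive f) (g : α → α) :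
    hf.orbitSetoid ≤ loopSetoid f g := by
  rintro x y (rfl | rfl)
  exacts [EqvGen.refl _, EqvGen.rel _ _ (Or.inl rfl)]

theorem loopSetoid_self {f : α → α} (hf : Function.Involutive f) :
    loopSetoid f f = hf.orbitSetoid :=
  le_antisymm (loopSetoid_le (fun _ => Or.inr rfl) fun _ => Or.inr rfl)
    (orbitSetoid_le_loopSetoid hf f)

theorem loopSetoid_le_sup (f g h : α → α) :
    loopSetoid f h ≤ loopSetoid f g ⊔ loopSetoid g h :=
  loopSetoid_le (fun x => le_sup_left (a := loopSetoid f g) (EqvGen.rel x _ (Or.inl rfl)))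
    fun x => le_sup_right (b := loopSetoid g h) (EqvGen.rel x _ (Or.inr rfl))

theorem loops_eq_card_quotient {N : ℕ} (π σ : Equiv.Perm (Fin N)) :
    loops π σ = Nat.card (Quotient (loopSetoid π σ)) :=
  Nat.card_congr
    { toFun := Quot.map id fun x y h => EqvGen.rel x y h
      invFun := Quot.lift (Quot.mk _) fun _ _ (h : EqvGen _ _ _) => Quot.eqvGen_sound h
      left_inv := Quot.ind fun _ => rfl
      right_inv := Quot.ind fun _ => rfl }

theorem loops_comm {N : ℕ} (π σ : Equiv.Perm (Fin N)) : loops π σ = loops σ π := by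
  rw [loops_eq_card_quotient, loops_eq_card_quotient, loopSetoid_comm]

end Loops

namespace IsPairing

variable {k : ℕ} {π σ τ : Equiv.Perm (Fin (2 * k))}

theorem involutive (hπ : IsPairing π) : Function.Involutive π := hπ.1

theorem card_quotient_orbitSetoid (hπ : IsPairing π) :
    Nat.card (Quotient (Function.Involutive.orbitSetoid hπ.involutive)) = k := by
  have := Function.Involutive.two_mul_card_quotient_orbitSetoid hπ.involutive hπ.2
  rw [Fintype.card_fin] at this
  omega

theorem loops_le (hπ : IsPairing π) (σ : Equiv.Perm (Fin (2 * k))) : loops π σ ≤ k :=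
  (loops_eq_card_quotient π σ).trans_le <|
    (Setoid.card_quotient_le_of_le (orbitSetoid_le_loopSetoid hπ.involutive σ)).trans_eq
      hπ.card_quotient_orbitSetoid

theorem loops_self (hπ : IsPairing π) : loops π π = k := by
  rw [loops_eq_card_quotient, loopSetoid_self hπ.involutive, hπ.card_quotient_orbitSetoid]

theorem eq_of_loops_eq (hπ : IsPairing π) (hσ : IsPairing σ) (h : loops π σ = k) : π = σ := by
  replace h := (loops_eq_card_quotient π σ).symm.trans (h.trans hπ.card_quotient_orbitSetoid.symm)
  -- The loops of `π` and `σ` are then exactly the pairs `{x, π x}`, and `σ x` lies in that of `x`.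
  have hloop :=
    Setoid.eq_of_le_of_card_quotient_eq (orbitSetoid_le_loopSetoid hπ.involutive σ) h.symm
  refine Equiv.ext fun x => ?_
  have hx : hπ.involutive.orbitSetoid x (σ x) := hloop ▸ EqvGen.rel x (σ x) (Or.inr rfl)
  exact (hx.resolve_left (hσ.2 x)).symm

theorem loops_add_loops_le (hτ : IsPairing τ) (π σ : Equiv.Perm (Fin (2 * k))) :
    loops π τ + loops τ σ ≤ k + loops π σ := by
  have hsub := Setoid.card_quotient_add_card_quotient_le
    (loopSetoid_comm τ π ▸ orbitSetoid_le_loopSetoid hτ.involutive π)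
    (orbitSetoid_le_loopSetoid hτ.involutive σ)
  have hsup := Setoid.card_quotient_le_of_le (loopSetoid_le_sup π τ σ)
  simp only [loops_eq_card_quotient, ← hτ.card_quotient_orbitSetoid]
  omega

end IsPairing

/-- `d(π,σ) = k - loops(π,σ)` is a metric on the set of pairings of `{1,…,2k}`:
it is nonnegative, vanishes exactly on the diagonal, is symmetric, and satisfies the
triangle inequality. -/
theorem brauer_space_is_metric (k : ℕ) :
    let D := {f : Equiv.Perm (Fin (2 * k)) // IsPairing f}
    let d : D → D → ℤ := fun π σ => (k : ℤ) - (loops π.1 σ.1 : ℤ)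
    (∀ π σ : D, 0 ≤ d π σ) ∧
    (∀ π σ : D, d π σ = 0 ↔ π = σ) ∧
    (∀ π σ : D, d π σ = d σ π) ∧
    (∀ π σ τ : D, d π σ ≤ d π τ + d τ σ) := by
  intro D d
  refine ⟨fun π σ => ?_, fun π σ => ?_, fun π σ => ?_, fun π σ τ => ?_⟩
  · have := π.2.loops_le σ.1
    simp only [d]
    omega
  · refine ⟨fun h => Subtype.ext (π.2.eq_of_loops_eq σ.2 (by simp only [d] at h; omega)), ?_⟩
    rintro rfl
    simp only [d, π.2.loops_self, sub_self]
  · simp only [d, loops_comm π.1 σ.1]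
  · have := τ.2.loops_add_loops_le π.1 σ.1
    simp only [d]
    omega
end

section
/- With G_{kn}(π,σ) = n^{loops(π,σ)} and K = (2k)!!, for n > K the matrix G_{kn} is invertible and its inverse W_{kn} satisfies max_{π,σ} |δ_{πσ} − n^k W_{kn}(π,σ)| ≤ K/(n−K). -/
/-- The paper's double factorial: `x!! = (x-1)(x-3)(x-5)⋯`, ending at 1 or 2 (with `0!! = 1`). -/
def dfac (x : ℕ) : ℕ := Nat.doubleFactorial (x - 1)

instance {N : ℕ} : DecidablePred (IsPairing (N := N)) := fun _ => by
  unfold IsPairing; infer_instance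

/-- The set of pairings of `{1,…,2k}` (Brauer diagrams). -/
abbrev Pairings (k : ℕ) := {f : Equiv.Perm (Fin (2 * k)) // IsPairing f}

/-- The Gram matrix `G_{kn}(π,σ) = n^{loops(π,σ)}` on pairings of `{1,…,2k}`. -/
noncomputable def Gram (k n : ℕ) : Matrix (Pairings k) (Pairings k) ℝ :=
  fun π σ => (n : ℝ) ^ loops π.1 σ.1

/-- The matrix `H` defined by `G_{kn} = n^k (I + H)`. -/
noncomputable def Hmat (k n : ℕ) : Matrix (Pairings k) (Pairings k) ℝ :=
  fun π σ => ((n : ℝ) ^ k)⁻¹ * Gram k n π σ - (if π = σ then 1 else 0)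

/-- The `ℓ² → ℓ²` operator norm of a matrix. -/
noncomputable def opNorm {m : Type*} [Fintype m] [DecidableEq m] (X : Matrix m m ℝ) : ℝ :=
  ‖Matrix.toEuclideanCLM (𝕜 := ℝ) X‖

/-!
Superposing a pairing with itself gives exactly `k` loops (each loop is one pair), while two
distinct pairings give fewer: every loop contains at least two points, and the loop through a
point where the pairings differ contains at least three. So `H = n⁻ᵏ G - I` vanishes on the
diagonal and its other entries lie in `[0, 1/n]`; as there are at most `(2k)!!` pairings, the
Hilbert–Schmidt bound gives `‖H‖ ≤ K/n < 1`. Then `I + H` is invertible, and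
`D = I - (I + H)⁻¹ = H (I + H)⁻¹` satisfies `‖D‖ ≤ ‖H‖ (1 + ‖D‖)`, whence `‖D‖ ≤ K/(n - K)`.
-/

open Finset Function Equiv

lemma sub_one_mul_dfac_sub_two_le (N : ℕ) : (N - 1) * dfac (N - 2) ≤ dfac N := by
  match N with
  | 0 | 1 | 2 => decide
  | N + 3 => exact (Nat.doubleFactorial_add_two N).ge

abbrev FixedPointFreeInvolution (α : Type*) :=
  {f : Perm α // (∀ x, f (f x) = x) ∧ ∀ x, f x ≠ x}

namespace FixedPointFreeInvolution

variable {α : Type*} [DecidableEq α]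

def restrictCompl (f : FixedPointFreeInvolution α) {a b : α} (hab : f.1 a = b) :
    FixedPointFreeInvolution {x // x ∉ ({a, b} : Finset α)} :=
  ⟨f.1.subtypePerm fun x => by
      have hb : f.1 b = a := hab ▸ f.2.1 a
      have hxa : f.1 x = a ↔ x = b := by rw [← hb, f.1.injective.eq_iff]
      have hxb : f.1 x = b ↔ x = a := by rw [← hab, f.1.injective.eq_iff]
      simp only [mem_insert, mem_singleton, hxa, hxb]
      tauto,
    fun x => Subtype.ext (f.2.1 x), fun x hx => f.2.2 x (congrArg Subtype.val hx)⟩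

lemma restrictCompl_injective {a b : α} :
    Injective fun f : {f : FixedPointFreeInvolution α // f.1 a = b} => restrictCompl f.1 f.2 := by
  rintro ⟨f, hf⟩ ⟨g, hg⟩ hfg
  refine Subtype.ext (Subtype.ext (Equiv.ext fun x => ?_))
  by_cases hx : x ∈ ({a, b} : Finset α)
  · rcases mem_insert.1 hx with rfl | hx
    · exact hf.trans hg.symm
    · show f.1 x = g.1 x
      rw [mem_singleton.1 hx, ← hf, f.2.1, hf, ← hg, g.2.1]
  · exact congrArg (fun h : FixedPointFreeInvolution _ => (h.1 ⟨x, hx⟩).1) hfg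

variable [Fintype α]

theorem card_le_dfac_card :
    Fintype.card (FixedPointFreeInvolution α) ≤ dfac (Fintype.card α) := by
  induction hN : Fintype.card α using Nat.strong_induction_on generalizing α with
  | _ N ih =>
  rcases isEmpty_or_nonempty α with hα | ⟨⟨a⟩⟩
  · subst hN
    exact (Fintype.card_subtype_le _).trans (by simp [dfac])
  have hN0 : 0 < N := hN ▸ Fintype.card_pos_iff.2 ⟨a⟩
  -- Sort the involutions by the partner `b` of `a`; within one class, deleting the pair `{a, b}`
  -- is injective.
  have hfiber :
      ∀ b ∈ univ.erase a, #{f : FixedPointFreeInvolution α | f.1 a = b} ≤ dfac (N - 2) := by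
    intro b hb
    have hcard : Fintype.card {x // x ∉ ({a, b} : Finset α)} = N - 2 := by
      rw [Fintype.card_subtype_compl, Fintype.card_coe, card_pair (ne_of_mem_erase hb).symm, hN]
    rw [← Fintype.card_subtype]
    calc _ ≤ Fintype.card (FixedPointFreeInvolution {x // x ∉ ({a, b} : Finset α)}) :=
          Fintype.card_le_of_injective _ restrictCompl_injective
      _ ≤ dfac (N - 2) := ih (N - 2) (by omega) hcard
  calc Fintype.card (FixedPointFreeInvolution α)
      ≤ dfac (N - 2) * #(univ.erase a) :=
        card_le_mul_card_image_of_maps_to (fun f _ => mem_erase.2 ⟨f.2.2 a, mem_univ _⟩) _ hfiber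
    _ = (N - 1) * dfac (N - 2) := by rw [card_erase_of_mem (mem_univ a), card_univ, hN, mul_comm]
    _ ≤ dfac N := sub_one_mul_dfac_sub_two_le N

end FixedPointFreeInvolution

lemma card_pairings_le (k : ℕ) : Fintype.card (Pairings k) ≤ dfac (2 * k) := by
  have h := FixedPointFreeInvolution.card_le_dfac_card (α := Fin (2 * k))
  rw [Fintype.card_fin, Fintype.card_eq_nat_card] at h
  rwa [Fintype.card_eq_nat_card]

section FiberCount

variable {α β : Type*} [Fintype α] [Fintype β] [DecidableEq β]

lemma card_eq_two_mul_card_of_card_fiber_eq_two (q : α → β)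
    (h : ∀ b, #{a | q a = b} = 2) : Fintype.card α = 2 * Fintype.card β := by
  rw [← card_univ, card_eq_sum_card_fiberwise (fun a _ => mem_univ (q a))]
  simp [h, mul_comm]

lemma two_mul_card_lt_of_two_le_card_fiber (q : α → β) (h : ∀ b, 2 ≤ #{a | q a = b})
    {b₀ : β} (h₀ : 3 ≤ #{a | q a = b₀}) : 2 * Fintype.card β < Fintype.card α := by
  rw [← card_univ (α := α), card_eq_sum_card_fiberwise (fun a _ => mem_univ (q a)),
    ← card_univ, mul_comm, ← smul_eq_mul, ← sum_const]
  exact sum_lt_sum (fun b _ => h b) ⟨b₀, mem_univ _, h₀⟩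

end FiberCount

section Loops

variable {N : ℕ}

def loopRel (π σ : Perm (Fin N)) (x y : Fin N) : Prop := π x = y ∨ σ x = y

lemma loops_eq_card_quot (π σ : Perm (Fin N)) : loops π σ = Nat.card (Quot (loopRel π σ)) := rfl

variable {π σ : Perm (Fin N)}

lemma loopRel_mk_apply_left (x : Fin N) : Quot.mk (loopRel π σ) (π x) = Quot.mk _ x :=
  (Quot.sound (r := loopRel π σ) (Or.inl rfl)).symm

lemma loopRel_mk_apply_right (x : Fin N) : Quot.mk (loopRel π σ) (σ x) = Quot.mk _ x :=
  (Quot.sound (r := loopRel π σ) (Or.inr rfl)).symm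

lemma mem_pair_of_loopRel_mk_eq (hπ : IsPairing π) {x y : Fin N}
    (h : Quot.mk (loopRel π π) y = Quot.mk _ x) : y ∈ ({x, π x} : Finset (Fin N)) := by
  classical
  let pair : Quot (loopRel π π) → Finset (Fin N) :=
    Quot.lift (fun x => {x, π x}) fun x y hxy => by
      obtain rfl : π x = y := hxy.elim id id
      rw [hπ.1, pair_comm]
  have hpair : ({y, π y} : Finset (Fin N)) = {x, π x} := congrArg pair h
  exact hpair ▸ mem_insert_self y _

lemma pair_subset_loopRel_fiber [DecidableEq (Quot (loopRel π σ))] (x : Fin N) :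
    ({x, π x} : Finset (Fin N)) ⊆
      ({y | Quot.mk (loopRel π σ) y = Quot.mk _ x} : Finset (Fin N)) := by
  intro y hy
  rcases mem_insert.1 hy with rfl | hy
  · simp
  · simp [mem_singleton.1 hy, loopRel_mk_apply_left]

lemma two_mul_loops_self (hπ : IsPairing π) : 2 * loops π π = N := by
  classical
  let _ := Fintype.ofFinite (Quot (loopRel π π))
  have hfiber (x : Fin N) :
      #{y | Quot.mk (loopRel π π) y = Quot.mk _ x} = 2 := by
    rw [← card_pair (hπ.2 x).symm]
    refine congrArg card (Subset.antisymm (fun y hy => ?_) (pair_subset_loopRel_fiber x))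
    exact mem_pair_of_loopRel_mk_eq hπ (mem_filter.1 hy).2
  have h := card_eq_two_mul_card_of_card_fiber_eq_two (Quot.mk (loopRel π π))
    (Quot.ind hfiber)
  rw [Fintype.card_fin] at h
  rw [loops_eq_card_quot, Nat.card_eq_fintype_card]
  exact h.symm

lemma two_mul_loops_lt (hπ : IsPairing π) (hσ : IsPairing σ) (hne : π ≠ σ) :
    2 * loops π σ < N := by
  classical
  let _ := Fintype.ofFinite (Quot (loopRel π σ))
  obtain ⟨x₀, hx₀⟩ : ∃ x, π x ≠ σ x := not_forall.1 fun h => hne (Equiv.ext h)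
  have htriple : ({σ x₀, x₀, π x₀} : Finset (Fin N)) ⊆
      ({y | Quot.mk (loopRel π σ) y = Quot.mk _ x₀} : Finset (Fin N)) :=
    insert_subset (by simp [loopRel_mk_apply_right]) (pair_subset_loopRel_fiber x₀)
  have hcard : #({σ x₀, x₀, π x₀} : Finset (Fin N)) = 3 := by
    rw [card_insert_of_notMem (by simp [hσ.2 x₀, hx₀.symm]), card_pair (hπ.2 x₀).symm]
  have h := two_mul_card_lt_of_two_le_card_fiber (Quot.mk (loopRel π σ))
    (Quot.ind fun x =>
      (card_pair (hπ.2 x).symm).ge.trans (card_le_card (pair_subset_loopRel_fiber x)))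
    (hcard.ge.trans (card_le_card htriple))
  rwa [Fintype.card_fin, ← Nat.card_eq_fintype_card, ← loops_eq_card_quot] at h

end Loops

open scoped Matrix.Norms.L2Operator

namespace Matrix

variable {𝕜 n : Type*} [RCLike 𝕜] [Fintype n] [DecidableEq n]

lemma norm_entry_le_l2_opNorm {m : Type*} [Fintype m] (A : Matrix m n 𝕜)
    (i : m) (j : n) : ‖A i j‖ ≤ ‖A‖ :=
  calc ‖A i j‖ = ‖(EuclideanSpace.equiv m 𝕜).symm (A *ᵥ EuclideanSpace.single j 1) i‖ := by
        simp
    _ ≤ ‖(EuclideanSpace.equiv m 𝕜).symm (A *ᵥ EuclideanSpace.single j 1)‖ :=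
        PiLp.norm_apply_le _ i
    _ ≤ ‖A‖ * ‖EuclideanSpace.single j (1 : 𝕜)‖ := A.l2_opNorm_mulVec _
    _ = ‖A‖ := by simp

lemma l2_opNorm_le_sqrt_sum_norm_sq {m : Type*} [Fintype m] (A : Matrix m n 𝕜) :
    ‖A‖ ≤ √(∑ i, ∑ j, ‖A i j‖ ^ 2) := by
  rw [l2_opNorm_def]
  refine ContinuousLinearMap.opNorm_le_bound _ (Real.sqrt_nonneg _) fun x => ?_
  rw [EuclideanSpace.norm_eq, EuclideanSpace.norm_eq, ← Real.sqrt_mul (by positivity)]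
  refine Real.sqrt_le_sqrt ?_
  rw [sum_mul]
  refine sum_le_sum fun i _ => ?_
  calc ‖(A *ᵥ x) i‖ ^ 2 ≤ (∑ j, ‖A i j‖ * ‖x j‖) ^ 2 := by
        gcongr
        simpa only [mulVec, dotProduct, norm_mul] using norm_sum_le univ fun j => A i j * x j
    _ ≤ (∑ j, ‖A i j‖ ^ 2) * ∑ j, ‖x j‖ ^ 2 := sum_mul_sq_le_sq_mul_sq _ _ _

lemma l2_opNorm_le_card_mul_of_norm_le (A : Matrix n n 𝕜) {c : ℝ} (h : ∀ i j, ‖A i j‖ ≤ c) :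
    ‖A‖ ≤ Fintype.card n * c := by
  have hc : 0 ≤ (Fintype.card n : ℝ) * c := by
    rcases isEmpty_or_nonempty n with hn | ⟨⟨i⟩⟩
    · simp
    · exact mul_nonneg (Nat.cast_nonneg _) ((norm_nonneg _).trans (h i i))
  calc ‖A‖ ≤ √(∑ i, ∑ j, ‖A i j‖ ^ 2) := A.l2_opNorm_le_sqrt_sum_norm_sq
    _ ≤ √(∑ _i : n, ∑ _j : n, c ^ 2) := by gcongr with i _ j _; exact h i j
    _ = Fintype.card n * c := by
        rw [← Real.sqrt_sq hc]
        congr 1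
        simp only [sum_const, card_univ, nsmul_eq_mul]
        ring

end Matrix

lemma norm_one_sub_le_of_one_add_mul_eq_one {R : Type*} [SeminormedRing R] [NormOneClass R]
    {x y : R} (hxy : (1 + x) * y = 1) {q : ℝ} (hx : ‖x‖ ≤ q) (hq : q < 1) :
    ‖1 - y‖ ≤ q / (1 - q) := by
  have hD : x * y = 1 - y := eq_sub_of_add_eq' (by rwa [add_mul, one_mul] at hxy)
  have hy : ‖y‖ ≤ 1 + ‖1 - y‖ := by
    simpa using norm_sub_le (1 : R) (1 - y)
  have hD_le : ‖1 - y‖ ≤ q * (1 + ‖1 - y‖) :=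
    calc ‖1 - y‖ = ‖x * y‖ := by rw [hD]
      _ ≤ ‖x‖ * ‖y‖ := norm_mul_le x y
      _ ≤ q * (1 + ‖1 - y‖) := mul_le_mul hx hy (norm_nonneg y) ((norm_nonneg x).trans hx)
  rw [le_div_iff₀ (by linarith)]
  linarith

-- Makes the matrix ring nontrivial, hence `‖(1 : Matrix (Pairings k) (Pairings k) ℝ)‖ = 1`.
instance (k : ℕ) : Nonempty (Pairings k) :=
  ⟨⟨Fin.revPerm, Fin.rev_rev, fun x hx => by
    have := congrArg Fin.val hx
    simp only [Fin.revPerm_apply, Fin.val_rev] at this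
    omega⟩⟩

section Gram

variable {k n : ℕ}

lemma loops_self (π : Pairings k) : loops π.1 π.1 = k := by
  have := two_mul_loops_self π.2
  omega

lemma loops_lt_of_ne {π σ : Pairings k} (h : π ≠ σ) : loops π.1 σ.1 < k := by
  have := two_mul_loops_lt π.2 σ.2 (Subtype.coe_injective.ne h)
  omega

lemma gram_eq_smul_one_add_hmat (hn : n ≠ 0) : Gram k n = (n : ℝ) ^ k • (1 + Hmat k n) := by
  ext π σ
  simp [Hmat, Matrix.one_apply, hn]

lemma hmat_apply_self (hn : n ≠ 0) (π : Pairings k) : Hmat k n π π = 0 := by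
  simp [Hmat, Gram, loops_self, hn]

lemma abs_hmat_apply_le (hn : n ≠ 0) (π σ : Pairings k) : |Hmat k n π σ| ≤ 1 / n := by
  by_cases h : π = σ
  · rw [h, hmat_apply_self hn, abs_zero]
    positivity
  have hn' : (0 : ℝ) < n := by positivity
  have hpow : (n : ℝ) ^ loops π.1 σ.1 * n ≤ (n : ℝ) ^ k := by
    rw [← pow_succ]
    exact pow_le_pow_right₀ (by exact_mod_cast Nat.one_le_iff_ne_zero.2 hn) (loops_lt_of_ne h)
  rw [Hmat, Gram, if_neg h, sub_zero, abs_of_nonneg (by positivity),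
    inv_mul_le_iff₀ (by positivity), mul_one_div, le_div_iff₀ hn']
  exact hpow

lemma norm_hmat_le (hn : n ≠ 0) : ‖Hmat k n‖ ≤ dfac (2 * k) / n :=
  calc ‖Hmat k n‖ ≤ Fintype.card (Pairings k) * (1 / n) :=
        Matrix.l2_opNorm_le_card_mul_of_norm_le _ fun π σ => abs_hmat_apply_le hn π σ
    _ ≤ dfac (2 * k) * (1 / n) := by gcongr; exact_mod_cast card_pairings_le k
    _ = dfac (2 * k) / n := mul_one_div _ _

end Gram

/-- For `n > K = (2k)!!`, the Gram matrix `G_{kn}` is invertible and its inverse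
`W_{kn}` satisfies `|δ_{πσ} - n^k W_{kn}(π,σ)| ≤ K/(n-K)` for all `π,σ`. -/
theorem weingarten_inverse_estimate (k n : ℕ) (hn : dfac (2 * k) < n) :
    IsUnit (Gram k n) ∧
    ∀ π σ : Pairings k,
      |(if π = σ then (1 : ℝ) else 0) - (n : ℝ) ^ k * (Gram k n)⁻¹ π σ|
        ≤ (dfac (2 * k) : ℝ) / ((n : ℝ) - (dfac (2 * k) : ℝ)) := by
  have hn0 : n ≠ 0 := by omega
  have hq : (dfac (2 * k) : ℝ) / n < 1 := (div_lt_one (by positivity)).2 (by exact_mod_cast hn)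
  have hH : ‖Hmat k n‖ ≤ dfac (2 * k) / n := norm_hmat_le hn0
  have hdet : IsUnit (1 + Hmat k n).det := by
    rw [← Matrix.isUnit_iff_isUnit_det, ← sub_neg_eq_add]
    exact isUnit_one_sub_of_norm_lt_one ((norm_neg _).trans_lt (hH.trans_lt hq))
  have hnk : IsUnit ((n : ℝ) ^ k) := isUnit_iff_ne_zero.2 (by positivity)
  rw [gram_eq_smul_one_add_hmat hn0]
  refine ⟨(Matrix.isUnit_iff_isUnit_det _).2 ?_, fun π σ => ?_⟩
  · rw [Matrix.det_smul]
    exact (hnk.pow _).mul hdet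
  calc _ = ‖(1 - (1 + Hmat k n)⁻¹) π σ‖ := by
        have := hnk.invertible
        rw [Matrix.inv_smul _ _ hdet]
        simp [Matrix.one_apply, Real.norm_eq_abs, hn0]
    _ ≤ ‖1 - (1 + Hmat k n)⁻¹‖ := Matrix.norm_entry_le_l2_opNorm _ π σ
    _ ≤ dfac (2 * k) / n / (1 - dfac (2 * k) / n) :=
        norm_one_sub_le_of_one_add_mul_eq_one (Matrix.mul_nonsing_inv _ hdet) hH hq
    _ = dfac (2 * k) / (n - dfac (2 * k)) := by field_simp
end
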